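/- Let T_0 be a triangulation of a finite set P of points in the plane and let F = ⟨f_1,…,f_r⟩ be a valid sequence of flips transforming T_0 into T_r. If f_s is a sink of D_F (no arc of D_F leaves f_s), then the sequence F′ obtained from F by deleting f_s and appending it at the end is a valid sequence of flips with respect to T_0 and F′ transforms T_0 into T_r. -/

import Mathlib

/-- A point in the plane. -/
abbrev Pt := ℝ × ℝ

/-- An edge is an (unordered) pair of points, modeled as a finite set of points
(of cardinality 2 whenever relevant). -/
abbrev Edge := Finset Pt

/-- A triangulation of a finite point set `P` in the plane: a set of (nondegenerate)
triangles with vertices in `P`, whose union is the convex hull of `P`, whose interiors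
are pairwise disjoint, and such that every point of `P` is a vertex of some triangle.
Each triangle is modeled by its vertex set (a 3-element finset). -/
structure Triangulation (P : Finset Pt) where
  triangles : Finset (Finset Pt)
  card_eq : ∀ T ∈ triangles, T.card = 3
  not_collinear : ∀ T ∈ triangles, ¬ Collinear ℝ (T : Set Pt)
  vertices_subset : ∀ T ∈ triangles, (T : Set Pt) ⊆ (P : Set Pt)
  covers : (⋃ T ∈ triangles, convexHull ℝ (T : Set Pt)) = convexHull ℝ (P : Set Pt)
  interiors_disjoint : ∀ T₁ ∈ triangles, ∀ T₂ ∈ triangles, T₁ ≠ T₂ →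
    interior (convexHull ℝ (T₁ : Set Pt)) ∩ interior (convexHull ℝ (T₂ : Set Pt)) = ∅
  mem_vertex : ∀ p ∈ P, ∃ T ∈ triangles, p ∈ T

/-- `e` is an edge (a side of some triangle) of the triangulation `𝒯`. -/
def Triangulation.IsEdge {P : Finset Pt} (𝒯 : Triangulation P) (e : Edge) : Prop :=
  e.card = 2 ∧ ∃ T ∈ 𝒯.triangles, e ⊆ T

/-- The edges `e` and `e'` are both sides of one triangle of `𝒯`. -/
def Triangulation.BothInTriangle {P : Finset Pt} (𝒯 : Triangulation P) (e e' : Edge) : Prop :=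
  e.card = 2 ∧ e'.card = 2 ∧ ∃ T ∈ 𝒯.triangles, e ⊆ T ∧ e' ⊆ T

/-- The two distinct edges `e` and `e'` share a triangle in `𝒯`. -/
def Triangulation.ShareTriangle {P : Finset Pt} (𝒯 : Triangulation P) (e e' : Edge) : Prop :=
  e ≠ e' ∧ 𝒯.BothInTriangle e e'

/-- A flip: it removes the underlying edge `old` (the edge `ε(f)`) and creates the
new edge `new` (the edge `φ(f)`). -/
structure Flip where
  old : Edge
  new : Edge

/-- The flip `f` is admissible in the triangulation `𝒯` and performing it in `𝒯`
yields the triangulation `𝒯'`: the underlying edge `f.old` is an interior edge of `𝒯`,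
i.e. a side of exactly two triangles `T₁ ≠ T₂` of `𝒯`, the quadrilateral `T₁ ∪ T₂`
they form is convex (has four vertices, each in convex position), `f.new` is the other
diagonal of this quadrilateral, and `𝒯'` is obtained from `𝒯` by replacing `T₁, T₂`
by the two triangles of the quadrilateral determined by the new diagonal. -/
def FlipStep {P : Finset Pt} (𝒯 : Triangulation P) (f : Flip) (𝒯' : Triangulation P) : Prop :=
  ∃ T₁ ∈ 𝒯.triangles, ∃ T₂ ∈ 𝒯.triangles, T₁ ≠ T₂ ∧
    f.old.card = 2 ∧ f.old ⊆ T₁ ∧ f.old ⊆ T₂ ∧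
    (∀ T ∈ 𝒯.triangles, f.old ⊆ T → T = T₁ ∨ T = T₂) ∧
    (T₁ ∪ T₂).card = 4 ∧
    (∀ p ∈ T₁ ∪ T₂, p ∉ convexHull ℝ (((T₁ ∪ T₂).erase p : Finset Pt) : Set Pt)) ∧
    f.new = (T₁ ∪ T₂) \ f.old ∧
    𝒯'.triangles = (𝒯.triangles \ {T₁, T₂}) ∪ f.old.image (fun p => insert p f.new)

/-- A valid sequence of `r` flips with respect to the triangulation `tri 0`,
together with the intermediate triangulations: flip `i` (the `(i+1)`-st flip) is
admissible in `tri i` and performing it yields `tri (i+1)`. The sequence transforms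
`tri 0` into `tri (Fin.last r)`. -/
structure FlipSeq (P : Finset Pt) (r : ℕ) where
  tri : Fin (r + 1) → Triangulation P
  flips : Fin r → Flip
  step : ∀ i : Fin r, FlipStep (tri i.castSucc) (flips i) (tri i.succ)

/-- The arc relation of the DAG `D_F`: there is an arc `fᵢ → fⱼ` iff `i < j`,
(1) `φ(fᵢ) = ε(fⱼ)` or `φ(fᵢ)` and `ε(fⱼ)` share a triangle in `T_{j-1}`, and
(2) no flip strictly between them has underlying edge `φ(fᵢ)`. -/
def FlipSeq.Arc {P : Finset Pt} {r : ℕ} (S : FlipSeq P r) (i j : Fin r) : Prop :=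
  i < j ∧
  ((S.flips i).new = (S.flips j).old ∨
    (S.tri j.castSucc).ShareTriangle (S.flips i).new (S.flips j).old) ∧
  ∀ p : Fin r, i < p → p < j → (S.flips p).old ≠ (S.flips i).new

/-- Two flips lie in the same weakly connected component of `D_F`. -/
def FlipSeq.SameComponent {P : Finset Pt} {r : ℕ} (S : FlipSeq P r) : Fin r → Fin r → Prop :=
  Relation.ReflTransGen (fun a b => S.Arc a b ∨ S.Arc b a)

/-- A solution `F` is normalized if the flips belonging to each weakly connected
component of `D_F` appear consecutively in `F`. -/
def FlipSeq.Normalized {P : Finset Pt} {r : ℕ} (S : FlipSeq P r) : Prop :=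
  ∀ i p j : Fin r, i ≤ p → p ≤ j → S.SameComponent i j → S.SameComponent i p

/-- `S` is a solution to the Flip Distance instance `(Tinit, Tfinal, k)`: a valid
sequence of `k` flips transforming `Tinit` into `Tfinal` such that no valid sequence
of fewer flips does so, i.e. `k` is the flip distance. -/
def IsSolution {P : Finset Pt} (Tinit Tfinal : Triangulation P) (k : ℕ) (S : FlipSeq P k) : Prop :=
  S.tri 0 = Tinit ∧ S.tri (Fin.last k) = Tfinal ∧
  ∀ (k' : ℕ) (S' : FlipSeq P k'), S'.tri 0 = Tinit → S'.tri (Fin.last k') = Tfinal → k ≤ k'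

/-- Two distinct edges cross: they intersect at a point interior to both segments. -/
def EdgesCross (e e' : Edge) : Prop :=
  e ≠ e' ∧ ∃ x : Pt,
    (x ∈ convexHull ℝ (e : Set Pt) ∧ x ∉ (e : Set Pt)) ∧
    (x ∈ convexHull ℝ (e' : Set Pt) ∧ x ∉ (e' : Set Pt))

/-- The state of the nondeterministic algorithm: a current triangulation, a current
edge, and a stack of edges. -/
structure AlgState (P : Finset Pt) where
  tri : Triangulation P
  cur : Edge
  stack : List Edge

/-- One action of the nondeterministic algorithm, labeled by `none` (no flip) or
`some f` (the flip performed). The five types of actions are: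
(i) move to an edge sharing a triangle with the current edge;
(ii) flip the current edge and move to an edge that shared a triangle with it;
(iii) flip the current edge, push the created edge, and move to an edge that shared
a triangle with it;
(iv) flip the current edge and jump to the edge on the top of the stack;
(v) flip the current edge, jump to the top of the stack, and pop the stack. -/
inductive AlgStep {P : Finset Pt} : AlgState P → Option Flip → AlgState P → Prop
  | move (s : AlgState P) (e' : Edge) :
      s.tri.ShareTriangle s.cur e' →
      AlgStep s none ⟨s.tri, e', s.stack⟩
  | flipMove (s : AlgState P) (f : Flip) (𝒯' : Triangulation P) (e' : Edge) :
      f.old = s.cur → FlipStep s.tri f 𝒯' → s.tri.ShareTriangle s.cur e' →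
      AlgStep s (some f) ⟨𝒯', e', s.stack⟩
  | flipPush (s : AlgState P) (f : Flip) (𝒯' : Triangulation P) (e' : Edge) :
      f.old = s.cur → FlipStep s.tri f 𝒯' → s.tri.ShareTriangle s.cur e' →
      AlgStep s (some f) ⟨𝒯', e', f.new :: s.stack⟩
  | flipJump (s : AlgState P) (f : Flip) (𝒯' : Triangulation P) (e : Edge) (rest : List Edge) :
      f.old = s.cur → FlipStep s.tri f 𝒯' → s.stack = e :: rest →
      AlgStep s (some f) ⟨𝒯', e, s.stack⟩
  | flipJumpPop (s : AlgState P) (f : Flip) (𝒯' : Triangulation P) (e : Edge) (rest : List Edge) :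
      f.old = s.cur → FlipStep s.tri f 𝒯' → s.stack = e :: rest →
      AlgStep s (some f) ⟨𝒯', e, rest⟩

/-- A run of the nondeterministic algorithm: a sequence of actions transforming one
state into another. -/
inductive AlgRun {P : Finset Pt} : AlgState P → List (Option Flip) → AlgState P → Prop
  | nil (s : AlgState P) : AlgRun s [] s
  | cons {s s' s'' : AlgState P} {a : Option Flip} {l : List (Option Flip)} :
      AlgStep s a s' → AlgRun s' l s'' → AlgRun s (a :: l) s''

/-- The permutation of indices corresponding to deleting the flip at position `s` and
appending it at the end: the new sequence at position `p` holds the old flip at index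
`moveToEnd s p`. -/
def moveToEnd {r : ℕ} (s p : Fin r) : Fin r :=
  if (p : ℕ) < (s : ℕ) then p
  else if h2 : (p : ℕ) + 1 < r then ⟨(p : ℕ) + 1, h2⟩
  else s

/-!
Moving the sink `f_s` to the end means commuting it past `f_{s+1}, …, f_r` one at a time.
Because `f_s` is a sink, by induction on `j` no flip between `f_s` and `f_j` removes `φ(f_s)`,
so condition (1) of an arc `f_s → f_j` must fail: `φ(f_s) ≠ ε(f_j)` and the two edges share no
triangle of `T_{j-1}`. For two consecutive flips `f`, `g` in this situation, the triangles removed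
by `g` are disjoint from those created by `f`, so performing `g` first (on the same quadrilateral)
and then `f` gives the same result. The only geometry needed is that a flip retriangulates a
convex quadrilateral whose diagonals cross at an interior point; this is what excludes `g`
recreating the edge `ε(f)`, and what makes the intermediate set of triangles a triangulation.
-/

open Set

section ConvexCombination

variable {E : Type*} [AddCommGroup E] [Module ℝ E]

theorem combo_mem_convexHull_triple (p q r : E) {a b c : ℝ} (ha : 0 ≤ a) (hb : 0 ≤ b)
    (hc : 0 ≤ c) (habc : a + b + c = 1) :
    a • p + b • q + c • r ∈ convexHull ℝ {p, q, r} := by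
  have := (convex_convexHull ℝ ({p, q, r} : Set E)).sum_mem (t := Finset.univ)
    (w := ![a, b, c]) (z := ![p, q, r])
    (by intro i _; fin_cases i <;> simpa)
    (by simp [Fin.sum_univ_three, habc])
    (by intro i _; fin_cases i <;> exact subset_convexHull ℝ _ (by simp))
  simpa [Fin.sum_univ_three] using this

theorem exists_weights_of_mem_convexHull_quad {p q u v x : E}
    (hx : x ∈ convexHull ℝ {p, q, u, v}) :
    ∃ a b c d : ℝ, 0 ≤ a ∧ 0 ≤ b ∧ 0 ≤ c ∧ 0 ≤ d ∧ a + b + c + d = 1 ∧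
      a • p + b • q + c • u + d • v = x := by
  rw [← convexJoin_segments, mem_convexJoin] at hx
  obtain ⟨m, ⟨s, t, hs, ht, hst, rfl⟩, n, ⟨s', t', hs', ht', hst', rfl⟩,
    ⟨θ, φ, hθ, hφ, hθφ, rfl⟩⟩ := hx
  refine ⟨θ * s, θ * t, φ * s', φ * t', by positivity, by positivity, by positivity,
    by positivity, by linear_combination θ * hst + φ * hst' + hθφ, by module⟩

theorem convexHull_quad_eq_union {p q u v z : E}
    (hpq : z ∈ segment ℝ p q) (huv : z ∈ openSegment ℝ u v) :
    convexHull ℝ {p, q, u, v} = convexHull ℝ {u, p, q} ∪ convexHull ℝ {v, p, q} := by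
  have hsub : ∀ w ∈ ({u, v} : Set E), ({w, p, q} : Set E) ⊆ {p, q, u, v} := by
    intro w hw y hy; simp only [mem_insert_iff, mem_singleton_iff] at hw hy ⊢; aesop
  refine Subset.antisymm (fun x hx => ?_)
    (union_subset (convexHull_mono (hsub u (by simp))) (convexHull_mono (hsub v (by simp))))
  obtain ⟨α, β, γ, δ, hα, hβ, hγ, hδ, hsum, rfl⟩ := exists_weights_of_mem_convexHull_quad hx
  obtain ⟨a, b, ha, hb, hab, rfl⟩ := hpq
  obtain ⟨c, d, hc, hd, hcd, hz⟩ := huv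
  rcases le_total (δ * c) (γ * d) with h | h
  · have hv : v = (a / d) • p + (b / d) • q - (c / d) • u := by
      rw [← inv_smul_smul₀ hd.ne' v, show d • v = a • p + b • q - c • u by rw [← hz]; abel]
      module
    left
    convert combo_mem_convexHull_triple u p q (a := γ - δ * c / d) (b := α + δ * a / d)
      (c := β + δ * b / d) (by rw [sub_nonneg, div_le_iff₀ hd]; linarith) (by positivity)
      (by positivity) (by field_simp; linear_combination d * hsum + δ * hab - δ * hcd) using 1
    rw [hv]; module
  · have hu : u = (a / c) • p + (b / c) • q - (d / c) • v := by
      rw [← inv_smul_smul₀ hc.ne' u, show c • u = a • p + b • q - d • v by rw [← hz]; abel]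
      module
    right
    convert combo_mem_convexHull_triple v p q (a := δ - γ * d / c) (b := α + γ * a / c)
      (c := β + γ * b / c) (by rw [sub_nonneg, div_le_iff₀ hc]; linarith) (by positivity)
      (by positivity) (by field_simp; linear_combination c * hsum + γ * hab - γ * hcd) using 1
    rw [hu]; module

end ConvexCombination

theorem Convex.disjoint_of_disjoint_interior {E : Type*} [AddCommGroup E] [Module ℝ E]
    [TopologicalSpace E] [IsTopologicalAddGroup E] [ContinuousSMul ℝ E] {K O : Set E}
    (hK : Convex ℝ K) (hKi : (interior K).Nonempty) (hO : IsOpen O)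
    (h : Disjoint O (interior K)) : Disjoint O K :=
  (h.closure_right hO).mono_right
    ((hK.closure_interior_eq_closure_of_nonempty_interior hKi).symm ▸ subset_closure)

section Plane

theorem exists_affineBasis_of_not_collinear {p q r : Pt} (h : ¬ Collinear ℝ {p, q, r}) :
    ∃ b : AffineBasis (Fin 3) ℝ Pt, ⇑b = ![p, q, r] := by
  have hind : AffineIndependent ℝ ![p, q, r] := affineIndependent_iff_not_collinear_set.2 h
  have htop : affineSpan ℝ (range ![p, q, r]) = ⊤ :=
    hind.affineSpan_eq_top_iff_card_eq_finrank_add_one.2 (by simp)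
  exact ⟨⟨![p, q, r], hind, htop⟩, rfl⟩

theorem exists_weights_of_not_collinear {p q r : Pt} (h : ¬ Collinear ℝ {p, q, r}) (x : Pt) :
    ∃ a b c : ℝ, a + b + c = 1 ∧ a • p + b • q + c • r = x := by
  obtain ⟨b, hb⟩ := exists_affineBasis_of_not_collinear h
  have hsum := b.sum_coord_apply_eq_one x
  have hx := b.affineCombination_coord_eq_self x
  rw [Finset.affineCombination_eq_linear_combination _ _ _ hsum] at hx
  rw [Fin.sum_univ_three] at hsum
  simp only [Fin.sum_univ_three, hb] at hx
  exact ⟨_, _, _, hsum, by simpa using hx⟩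

theorem combo_mem_interior_convexHull_triple {p q r : Pt} (h : ¬ Collinear ℝ {p, q, r})
    {a b c : ℝ} (ha : 0 < a) (hb : 0 < b) (hc : 0 < c) (habc : a + b + c = 1) :
    a • p + b • q + c • r ∈ interior (convexHull ℝ {p, q, r}) := by
  obtain ⟨B, hB⟩ := exists_affineBasis_of_not_collinear h
  have hrange : range B = {p, q, r} := by
    rw [hB, Matrix.range_cons, Matrix.range_cons, Matrix.range_cons, Matrix.range_empty]
    ext; simp only [mem_union, mem_singleton_iff, mem_insert_iff, mem_empty_iff_false]; tauto
  have hx : a • p + b • q + c • r = Finset.univ.affineCombination ℝ B ![a, b, c] := by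
    rw [Finset.affineCombination_eq_linear_combination _ _ _
      (by simp [Fin.sum_univ_three, habc])]
    simp [Fin.sum_univ_three, hB]
  rw [← hrange, B.interior_convexHull]
  intro i
  rw [hx, B.coord_apply_combination_of_mem (Finset.mem_univ i)
    (by simp [Fin.sum_univ_three, habc])]
  fin_cases i <;> simpa

theorem interior_convexHull_triple_nonempty {p q r : Pt} (h : ¬ Collinear ℝ {p, q, r}) :
    (interior (convexHull ℝ {p, q, r})).Nonempty :=
  ⟨_, combo_mem_interior_convexHull_triple h (a := 3⁻¹) (b := 3⁻¹) (c := 3⁻¹)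
    (by norm_num) (by norm_num) (by norm_num) (by norm_num)⟩

theorem mem_interior_convexHull_quad {p q u v z : Pt} (hu : ¬ Collinear ℝ {u, p, q})
    (hpq : z ∈ openSegment ℝ p q) (huv : z ∈ openSegment ℝ u v) :
    z ∈ interior (convexHull ℝ {p, q, u, v}) := by
  obtain ⟨a, b, ha, hb, hab, rfl⟩ := hpq
  obtain ⟨c, d, hc, hd, hcd, hz⟩ := huv
  have hy : (1 / 2 : ℝ) • u + (a / 2) • p + (b / 2) • q ∈
      interior (convexHull ℝ {p, q, u, v}) :=
    interior_mono (convexHull_mono fun y => by simp only [mem_insert_iff, mem_singleton_iff]; tauto)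
      (combo_mem_interior_convexHull_triple hu (by norm_num) (by positivity) (by positivity)
        (by linear_combination hab / 2))
  have hv : v ∈ closure (convexHull ℝ {p, q, u, v}) :=
    subset_closure (subset_convexHull ℝ _ (by simp))
  refine (convex_convexHull ℝ _).openSegment_interior_closure_subset_interior hy hv
    ⟨2 * c / (1 + c), d / (1 + c), by positivity, by positivity,
      by field_simp; linear_combination hcd, ?_⟩
  have hu' : u = (a / c) • p + (b / c) • q - (d / c) • v := by
    rw [← inv_smul_smul₀ hc.ne' u, show c • u = a • p + b • q - d • v by rw [← hz]; abel]
    module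
  rw [hu']
  match_scalars <;> field_simp
  ring

theorem exists_mem_openSegment_diagonals {p q u v : Pt} (hu : ¬ Collinear ℝ {u, p, q})
    (hv : ¬ Collinear ℝ {v, p, q})
    (hdisj : Disjoint (interior (convexHull ℝ {u, p, q})) (interior (convexHull ℝ {v, p, q})))
    (hp : p ∉ convexHull ℝ {q, u, v}) (hq : q ∉ convexHull ℝ {p, u, v}) :
    ∃ z ∈ openSegment ℝ p q, z ∈ openSegment ℝ u v := by
  obtain ⟨c, a, b, habc, hz⟩ := exists_weights_of_not_collinear hv u
  have hc : c < 0 := by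
    rcases lt_trichotomy c 0 with hc | rfl | hc
    · exact hc
    · refine absurd (collinear_insert_of_mem_affineSpan_pair ?_) hu
      rw [← hz, show a = 1 - b by linarith]
      simpa [AffineMap.lineMap_apply_module] using
        AffineMap.lineMap_mem_affineSpan_pair (k := ℝ) b p q
    · -- a point close to the common edge `pq` lies in both open triangles
      set w := 1 + |a| + |b|
      have hw : 0 < 2 * w + 1 := by positivity
      have hx := combo_mem_interior_convexHull_triple hu (a := 1 / (2 * w + 1))
        (b := w / (2 * w + 1)) (c := w / (2 * w + 1)) (by positivity) (by positivity)
        (by positivity) (by field_simp; ring)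
      have hx' := combo_mem_interior_convexHull_triple hv (a := c / (2 * w + 1))
        (b := (w + a) / (2 * w + 1)) (c := (w + b) / (2 * w + 1)) (by positivity)
        (div_pos (by linarith [neg_abs_le a, abs_nonneg b]) hw)
        (div_pos (by linarith [neg_abs_le b, abs_nonneg a]) hw)
        (by field_simp; linear_combination habc)
      refine (Set.disjoint_left.1 hdisj hx ?_).elim
      convert hx' using 1
      rw [← hz]
      match_scalars <;> field_simp <;> ring
  have ha : 0 < a := by
    by_contra! ha
    have hb : 0 < b := by linarith
    refine hq ?_
    convert combo_mem_convexHull_triple p u v (a := -a / b) (b := 1 / b) (c := -c / b)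
      (div_nonneg (by linarith) hb.le) (by positivity)
      (div_nonneg (by linarith) hb.le) (by field_simp; linarith) using 1
    rw [← hz]
    match_scalars <;> field_simp <;> ring
  have hb : 0 < b := by
    by_contra! hb
    refine hp ?_
    convert combo_mem_convexHull_triple q u v (a := -b / a) (b := 1 / a) (c := -c / a)
      (div_nonneg (by linarith) ha.le) (by positivity)
      (div_nonneg (by linarith) ha.le) (by field_simp; linarith) using 1
    rw [← hz]
    match_scalars <;> field_simp <;> ring
  have hc' : 0 < 1 - c := by linarith
  refine ⟨(a / (1 - c)) • p + (b / (1 - c)) • q,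
    ⟨_, _, by positivity, by positivity, by field_simp; linarith, rfl⟩,
    ⟨1 / (1 - c), -c / (1 - c), by positivity, div_pos (by linarith) hc', by field_simp; ring,
      ?_⟩⟩
  rw [← hz]
  match_scalars <;> field_simp
  ring

end Plane

namespace Triangulation

variable {P : Finset Pt}

theorem interior_convexHull_nonempty (𝒯 : Triangulation P) {T : Finset Pt}
    (hT : T ∈ 𝒯.triangles) : (interior (convexHull ℝ (T : Set Pt))).Nonempty := by
  obtain ⟨x, y, z, -, -, -, rfl⟩ := Finset.card_eq_three.mp (𝒯.card_eq T hT)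
  have := 𝒯.not_collinear _ hT
  push_cast at this ⊢
  exact interior_convexHull_triple_nonempty this

theorem disjoint_interior_convexHull (𝒯 : Triangulation P) {T U : Finset Pt}
    (hT : T ∈ 𝒯.triangles) (hU : U ∈ 𝒯.triangles) (hTU : T ≠ U) :
    Disjoint (interior (convexHull ℝ (T : Set Pt))) (convexHull ℝ (U : Set Pt)) :=
  (convex_convexHull ℝ _).disjoint_of_disjoint_interior (𝒯.interior_convexHull_nonempty hU)
    isOpen_interior (Set.disjoint_iff_inter_eq_empty.2 (𝒯.interiors_disjoint T hT U hU hTU))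

noncomputable def replace (𝒯 𝒳 : Triangulation P) (R N : Finset (Finset Pt))
    (hR : R ⊆ 𝒯.triangles) (hN : N ⊆ 𝒳.triangles)
    (hcover : ⋃ T ∈ R, convexHull ℝ (T : Set Pt) = ⋃ T ∈ N, convexHull ℝ (T : Set Pt))
    (hdisj : ∀ S ∈ 𝒯.triangles \ R, ∀ T ∈ N, S ≠ T →
      interior (convexHull ℝ (S : Set Pt)) ∩ interior (convexHull ℝ (T : Set Pt)) = ∅)
    (hvert : ∀ T ∈ R, ∀ x ∈ T, ∃ T' ∈ N, x ∈ T') : Triangulation P where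
  triangles := 𝒯.triangles \ R ∪ N
  card_eq T hT := (Finset.mem_union.1 hT).elim
    (fun h => 𝒯.card_eq T (Finset.mem_sdiff.1 h).1) (fun h => 𝒳.card_eq T (hN h))
  not_collinear T hT := (Finset.mem_union.1 hT).elim
    (fun h => 𝒯.not_collinear T (Finset.mem_sdiff.1 h).1)
    (fun h => 𝒳.not_collinear T (hN h))
  vertices_subset T hT := (Finset.mem_union.1 hT).elim
    (fun h => 𝒯.vertices_subset T (Finset.mem_sdiff.1 h).1)
    (fun h => 𝒳.vertices_subset T (hN h))
  covers := by
    rw [Finset.set_biUnion_union, ← hcover, ← Finset.set_biUnion_union,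
      Finset.sdiff_union_of_subset hR, 𝒯.covers]
  interiors_disjoint S hS T hT hST := by
    rcases Finset.mem_union.1 hS with hS | hS <;> rcases Finset.mem_union.1 hT with hT | hT
    · exact 𝒯.interiors_disjoint S (Finset.mem_sdiff.1 hS).1 T (Finset.mem_sdiff.1 hT).1 hST
    · exact hdisj S hS T hT hST
    · rw [Set.inter_comm]; exact hdisj T hT S hS hST.symm
    · exact 𝒳.interiors_disjoint S (hN hS) T (hN hT) hST
  mem_vertex x hx := by
    obtain ⟨T, hT, hxT⟩ := 𝒯.mem_vertex x hx
    by_cases hTR : T ∈ R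
    · obtain ⟨T', hT', hxT'⟩ := hvert T hTR x hxT
      exact ⟨T', Finset.mem_union_right _ hT', hxT'⟩
    · exact ⟨T, Finset.mem_union_left _ (Finset.mem_sdiff.2 ⟨hT, hTR⟩), hxT⟩

end Triangulation

section FinsetPairs

variable {α : Type*} [DecidableEq α]

theorem image_insert_sdiff_eq_pair {o T₁ T₂ : Finset α} (ho₁ : o ⊆ T₁) (ho₂ : o ⊆ T₂)
    (h₁ : o.card + 1 = T₁.card) (h₂ : o.card + 1 = T₂.card) :
    ((T₁ ∪ T₂) \ o).image (insert · o) = {T₁, T₂} := by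
  obtain ⟨u, hu, rfl⟩ := Finset.exists_eq_insert_iff.2 ⟨ho₁, h₁⟩
  obtain ⟨v, hv, rfl⟩ := Finset.exists_eq_insert_iff.2 ⟨ho₂, h₂⟩
  have : (insert u o ∪ insert v o) \ o = {u, v} := by
    ext x; simp only [Finset.mem_sdiff, Finset.mem_union, Finset.mem_insert, Finset.mem_singleton]
    grind
  rw [this]
  simp

theorem subset_or_exists_subset_insert {S O N : Finset α} {x : α} (hS : S.card = 2)
    (hx : x ∈ O) (h : S ⊆ insert x N) : S ⊆ N ∨ ∃ y ∈ N, S ⊆ insert y O := by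
  by_cases hxS : x ∈ S
  · obtain ⟨y, hy⟩ := Finset.card_eq_one.1
      (show (S.erase x).card = 1 by rw [Finset.card_erase_of_mem hxS, hS])
    have hyS : y ∈ S.erase x := by rw [hy]; exact Finset.mem_singleton_self y
    refine Or.inr ⟨y, (Finset.mem_insert.1 (h (Finset.mem_of_mem_erase hyS))).resolve_left
      (Finset.ne_of_mem_erase hyS), fun w hw => ?_⟩
    by_cases hwx : w = x
    · exact Finset.mem_insert_of_mem (hwx ▸ hx)
    · have hw' : w ∈ S.erase x := Finset.mem_erase.2 ⟨hwx, hw⟩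
      rw [hy, Finset.mem_singleton] at hw'
      exact hw' ▸ Finset.mem_insert_self y O
  · exact Or.inl fun w hw =>
      (Finset.mem_insert.1 (h hw)).resolve_left fun hwx => hxS (hwx ▸ hw)

theorem sdiff_union_sdiff_union_comm {a r n r' n' : Finset α} (h : Disjoint n r')
    (h' : Disjoint n' r) : (a \ r ∪ n) \ r' ∪ n' = (a \ r' ∪ n') \ r ∪ n := by
  ext x
  have hx : x ∈ n → x ∉ r' := fun hx => Finset.disjoint_left.1 h hx
  have hx' : x ∈ n' → x ∉ r := fun hx => Finset.disjoint_left.1 h' hx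
  simp only [Finset.mem_union, Finset.mem_sdiff]
  tauto

end FinsetPairs

namespace Flip

-- The triangles that a flip removes and creates are determined by its two diagonals.
noncomputable def removed (f : Flip) : Finset (Finset Pt) := f.new.image (insert · f.old)

noncomputable def added (f : Flip) : Finset (Finset Pt) := f.old.image (insert · f.new)

theorem old_subset_of_mem_removed {f : Flip} {T : Finset Pt} (hT : T ∈ f.removed) :
    f.old ⊆ T := by
  obtain ⟨x, -, rfl⟩ := Finset.mem_image.1 hT
  exact Finset.subset_insert x f.old

theorem new_subset_of_mem_added {f : Flip} {T : Finset Pt} (hT : T ∈ f.added) :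
    f.new ⊆ T := by
  obtain ⟨x, -, rfl⟩ := Finset.mem_image.1 hT
  exact Finset.subset_insert x f.new

theorem exists_mem_added_of_mem_removed {f : Flip} (hf : f.old.Nonempty) {T : Finset Pt}
    (hT : T ∈ f.removed) {x : Pt} (hx : x ∈ T) : ∃ T' ∈ f.added, x ∈ T' := by
  obtain ⟨y, hy, rfl⟩ := Finset.mem_image.1 hT
  rcases Finset.mem_insert.1 hx with rfl | hx
  · obtain ⟨w, hw⟩ := hf
    exact ⟨insert w f.new, Finset.mem_image_of_mem _ hw, Finset.mem_insert_of_mem hy⟩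
  · exact ⟨insert x f.new, Finset.mem_image_of_mem _ hx, Finset.mem_insert_self x f.new⟩

theorem removed_eq_pair {P : Finset Pt} {A : Triangulation P} {f : Flip} {T₁ T₂ : Finset Pt}
    (hT₁ : T₁ ∈ A.triangles) (hT₂ : T₂ ∈ A.triangles) (ho : f.old.card = 2)
    (ho₁ : f.old ⊆ T₁) (ho₂ : f.old ⊆ T₂)
    (hnew : f.new = (T₁ ∪ T₂) \ f.old) : f.removed = {T₁, T₂} := by
  rw [removed, hnew]
  exact image_insert_sdiff_eq_pair ho₁ ho₂ (by rw [ho, A.card_eq _ hT₁])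
    (by rw [ho, A.card_eq _ hT₂])

end Flip

namespace FlipStep

variable {P : Finset Pt} {A B : Triangulation P} {f : Flip}

theorem card_old (h : FlipStep A f B) : f.old.card = 2 := by
  obtain ⟨T₁, -, T₂, -, -, ho, -⟩ := h
  exact ho

theorem card_new (h : FlipStep A f B) : f.new.card = 2 := by
  obtain ⟨T₁, -, T₂, -, -, ho, ho₁, -, -, h4, -, hnew, -⟩ := h
  rw [hnew, Finset.card_sdiff_of_subset (ho₁.trans Finset.subset_union_left), h4, ho]

theorem disjoint_old_new (h : FlipStep A f B) : Disjoint f.old f.new := by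
  obtain ⟨T₁, -, T₂, -, -, -, -, -, -, -, -, hnew, -⟩ := h
  exact hnew ▸ Finset.disjoint_sdiff

theorem removed_subset (h : FlipStep A f B) : f.removed ⊆ A.triangles := by
  obtain ⟨T₁, hT₁, T₂, hT₂, -, ho, ho₁, ho₂, -, -, -, hnew, -⟩ := h
  rw [Flip.removed_eq_pair hT₁ hT₂ ho ho₁ ho₂ hnew, Finset.insert_subset_iff,
    Finset.singleton_subset_iff]
  exact ⟨hT₁, hT₂⟩

theorem mem_removed (h : FlipStep A f B) {T : Finset Pt} (hT : T ∈ A.triangles)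
    (hoT : f.old ⊆ T) : T ∈ f.removed := by
  obtain ⟨T₁, hT₁, T₂, hT₂, -, ho, ho₁, ho₂, huniq, -, -, hnew, -⟩ := h
  rw [Flip.removed_eq_pair hT₁ hT₂ ho ho₁ ho₂ hnew]
  simpa using huniq T hT hoT

theorem triangles_eq (h : FlipStep A f B) :
    B.triangles = A.triangles \ f.removed ∪ f.added := by
  obtain ⟨T₁, hT₁, T₂, hT₂, -, ho, ho₁, ho₂, -, -, -, hnew, htri⟩ := h
  rw [Flip.removed_eq_pair hT₁ hT₂ ho ho₁ ho₂ hnew, htri]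
  rfl

theorem added_subset (h : FlipStep A f B) : f.added ⊆ B.triangles :=
  h.triangles_eq ▸ Finset.subset_union_right

theorem of_local (h : FlipStep A f B) {X Y : Triangulation P}
    (hloc : ∀ T, f.old ⊆ T → (T ∈ A.triangles ↔ T ∈ X.triangles))
    (hY : Y.triangles = X.triangles \ f.removed ∪ f.added) : FlipStep X f Y := by
  obtain ⟨T₁, hT₁, T₂, hT₂, hne, ho, ho₁, ho₂, huniq, h4, hpos, hnew, -⟩ := h
  refine ⟨T₁, (hloc T₁ ho₁).1 hT₁, T₂, (hloc T₂ ho₂).1 hT₂, hne, ho, ho₁, ho₂,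
    fun T hT hoT => huniq T ((hloc T hoT).2 hT) hoT, h4, hpos, hnew, ?_⟩
  rw [hY, Flip.removed_eq_pair hT₁ hT₂ ho ho₁ ho₂ hnew]
  rfl

theorem removed_nonempty (h : FlipStep A f B) : f.removed.Nonempty :=
  (Finset.card_pos.1 (by rw [h.card_new]; norm_num)).image _

theorem not_old_subset (h : FlipStep A f B) {T : Finset Pt} (hT : T ∈ B.triangles) :
    ¬ f.old ⊆ T := by
  intro hoT
  rcases Finset.mem_union.1 (h.triangles_eq ▸ hT) with hT | hT
  · exact (Finset.mem_sdiff.1 hT).2 (h.mem_removed (Finset.mem_sdiff.1 hT).1 hoT)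
  · obtain ⟨x, hx, rfl⟩ := Finset.mem_image.1 hT
    obtain ⟨y, hy, hyx⟩ := Finset.exists_mem_ne (by rw [h.card_old]; norm_num) x
    exact Finset.disjoint_left.1 h.disjoint_old_new hy
      ((Finset.mem_insert.1 (hoT hy)).resolve_left hyx)

theorem exists_diagonals_cross (h : FlipStep A f B) :
    ∃ p q u v z : Pt, f.old = {p, q} ∧ f.new = {u, v} ∧ ¬ Collinear ℝ {u, p, q} ∧
      z ∈ openSegment ℝ p q ∧ z ∈ openSegment ℝ u v := by
  rcases f with ⟨o, n⟩
  obtain ⟨T₁, hT₁, T₂, hT₂, hne, ho, ho₁, ho₂, -, h4, hpos, hnew, -⟩ := h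
  obtain ⟨p, q, hpq, rfl⟩ := Finset.card_eq_two.1 ho
  obtain ⟨u, hu, rfl⟩ := Finset.exists_eq_insert_iff.2 ⟨ho₁, by rw [ho, A.card_eq _ hT₁]⟩
  obtain ⟨v, hv, rfl⟩ := Finset.exists_eq_insert_iff.2 ⟨ho₂, by rw [ho, A.card_eq _ hT₂]⟩
  have huv : u ≠ v := by
    rintro rfl
    rw [Finset.union_self, A.card_eq _ hT₁] at h4
    exact absurd h4 (by norm_num)
  simp only [Finset.mem_insert, Finset.mem_singleton, not_or] at hu hv
  have hcol := A.not_collinear _ hT₁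
  have hdisj := Set.disjoint_iff_inter_eq_empty.2 (A.interiors_disjoint _ hT₁ _ hT₂ hne)
  have hp := hpos p (by simp)
  have hq := hpos q (by simp)
  push_cast at hcol hdisj hp hq
  obtain ⟨z, hz₁, hz₂⟩ := exists_mem_openSegment_diagonals hcol
    (by simpa using A.not_collinear _ hT₂) hdisj (by convert hp using 3; ext; simp; grind)
    (by convert hq using 3; ext; simp; grind)
  refine ⟨p, q, u, v, z, rfl, ?_, hcol, hz₁, hz₂⟩
  rw [hnew]
  ext; simp; grind

theorem biUnion_removed_eq_added (h : FlipStep A f B) :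
    ⋃ T ∈ f.removed, convexHull ℝ (T : Set Pt) =
      ⋃ T ∈ f.added, convexHull ℝ (T : Set Pt) := by
  obtain ⟨p, q, u, v, z, hold, hnew, -, hz₁, hz₂⟩ := h.exists_diagonals_cross
  have hpq := convexHull_quad_eq_union (openSegment_subset_segment _ _ _ hz₁) hz₂
  have huv := convexHull_quad_eq_union (openSegment_subset_segment _ _ _ hz₂) hz₁
  rw [show ({u, v, p, q} : Set Pt) = {p, q, u, v} by ext; simp; tauto] at huv
  simp [Flip.removed, Flip.added, hold, hnew, ← hpq, ← huv]

theorem exists_mem_convexHull_new_interior (h : FlipStep A f B) :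
    ∃ z ∈ convexHull ℝ (f.new : Set Pt),
      z ∈ interior (⋃ T ∈ f.removed, convexHull ℝ (T : Set Pt)) := by
  obtain ⟨p, q, u, v, z, hold, hnew, hcol, hz₁, hz₂⟩ := h.exists_diagonals_cross
  refine ⟨z, ?_, ?_⟩
  · rw [hnew, Finset.coe_pair, convexHull_pair]
    exact openSegment_subset_segment _ _ _ hz₂
  · have := mem_interior_convexHull_quad hcol hz₁ hz₂
    rw [convexHull_quad_eq_union (openSegment_subset_segment _ _ _ hz₁) hz₂] at this
    simpa [Flip.removed, hold, hnew] using this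

section Postpone

variable {C : Triangulation P} {g : Flip}
  (hf : FlipStep A f B) (hg : FlipStep B g C)
  (hsep : ∀ T ∈ B.triangles, f.new ⊆ T → ¬ g.old ⊆ T)
include hf hg hsep

theorem removed_subset_sdiff : g.removed ⊆ A.triangles \ f.removed := by
  intro U hU
  have hUB := hg.removed_subset hU
  rw [hf.triangles_eq] at hUB
  exact (Finset.mem_union.1 hUB).resolve_right fun hUf => hsep U (hf.added_subset hUf)
    (Flip.new_subset_of_mem_added hUf) (Flip.old_subset_of_mem_removed hU)

theorem not_old_subset_of_mem_removed {T : Finset Pt} (hT : T ∈ f.removed) : ¬ g.old ⊆ T := by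
  intro hgT
  obtain ⟨u, hu, rfl⟩ := Finset.mem_image.1 hT
  rcases subset_or_exists_subset_insert hg.card_old hu hgT with hsub | ⟨y, hy, hsub⟩
  · obtain ⟨U, hU⟩ := hg.removed_nonempty
    have heq : g.old = f.old :=
      Finset.eq_of_subset_of_card_le hsub (by rw [hf.card_old, hg.card_old])
    exact hf.not_old_subset (hg.removed_subset hU) (heq ▸ Flip.old_subset_of_mem_removed hU)
  · exact hsep _ (hf.added_subset (Finset.mem_image_of_mem _ hy)) (Finset.subset_insert _ _)
      hsub

theorem disjoint_interior_biUnion_removed {T : Finset Pt} (hT : T ∈ f.removed) :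
    Disjoint (interior (convexHull ℝ (T : Set Pt)))
      (⋃ U ∈ g.removed, convexHull ℝ (U : Set Pt)) := by
  refine Set.disjoint_iUnion₂_right.2 fun U hU => ?_
  have hU' := Finset.mem_sdiff.1 (removed_subset_sdiff hf hg hsep hU)
  exact A.disjoint_interior_convexHull (hf.removed_subset hT) hU'.1
    (by rintro rfl; exact hU'.2 hT)

theorem not_old_subset_of_mem_added {G : Finset Pt} (hG : G ∈ g.added) : ¬ f.old ⊆ G := by
  intro hfG
  obtain ⟨x, hx, rfl⟩ := Finset.mem_image.1 hG
  rcases subset_or_exists_subset_insert hf.card_old hx hfG with hsub | ⟨y, hy, hsub⟩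
  · -- then `g` recreates `f.old`, which crosses the interior of the quadrilateral of `g`,
    -- while the triangles of `A` adjacent to `f.old` lie outside that quadrilateral
    have heq : f.old = g.new :=
      Finset.eq_of_subset_of_card_le hsub (by rw [hf.card_old, hg.card_new])
    obtain ⟨z, hz, hzi⟩ := hg.exists_mem_convexHull_new_interior
    obtain ⟨T, hT⟩ := hf.removed_nonempty
    have hzT : z ∈ convexHull ℝ (T : Set Pt) :=
      convexHull_mono (by exact_mod_cast heq ▸ Flip.old_subset_of_mem_removed hT) hz
    have hd := (disjoint_interior_biUnion_removed hf hg hsep hT).mono_right interior_subset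
    exact Set.disjoint_left.1 ((convex_convexHull ℝ _).disjoint_of_disjoint_interior
      (A.interior_convexHull_nonempty (hf.removed_subset hT)) isOpen_interior hd.symm) hzi hzT
  · exact hf.not_old_subset (hg.removed_subset (Finset.mem_image_of_mem _ hy)) hsub

theorem interiors_disjoint_of_mem_added :
    ∀ S ∈ A.triangles \ g.removed, ∀ G ∈ g.added, S ≠ G →
      interior (convexHull ℝ (S : Set Pt)) ∩ interior (convexHull ℝ (G : Set Pt)) = ∅ := by
  intro S hS G hG hSG
  rw [Finset.mem_sdiff] at hS
  by_cases hSf : S ∈ f.removed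
  · refine Set.disjoint_iff_inter_eq_empty.1
      ((disjoint_interior_biUnion_removed hf hg hsep hSf).mono_right ?_)
    rw [hg.biUnion_removed_eq_added]
    exact interior_subset.trans
      (Set.subset_biUnion_of_mem (u := fun T : Finset Pt => convexHull ℝ (T : Set Pt)) hG)
  · have hSC : S ∈ C.triangles := by
      rw [hg.triangles_eq, hf.triangles_eq]
      simp [hS, hSf]
    exact C.interiors_disjoint S hSC G (hg.added_subset hG) hSG

end Postpone

theorem exists_swap {C : Triangulation P} {g : Flip} (hf : FlipStep A f B)
    (hg : FlipStep B g C) (hne : f.new ≠ g.old)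
    (hsh : ¬ B.ShareTriangle f.new g.old) : ∃ B', FlipStep A g B' ∧ FlipStep B' f C := by
  have hsep : ∀ T ∈ B.triangles, f.new ⊆ T → ¬ g.old ⊆ T := fun T hT hfT hgT =>
    hsh ⟨hne, hf.card_new, hg.card_old, T, hT, hfT, hgT⟩
  let B' := A.replace C g.removed g.added
    ((hf.removed_subset_sdiff hg hsep).trans Finset.sdiff_subset) hg.added_subset
    hg.biUnion_removed_eq_added (hf.interiors_disjoint_of_mem_added hg hsep)
    fun _ hT _ hx => Flip.exists_mem_added_of_mem_removed
      (Finset.card_pos.1 (by rw [hg.card_old]; norm_num)) hT hx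
  refine ⟨B', hg.of_local (fun T hgT => ?_) rfl, hf.of_local (fun T hfT => ?_) ?_⟩
  · simp only [hf.triangles_eq, Finset.mem_union, Finset.mem_sdiff]
    exact ⟨fun h => h.elim And.left fun hT =>
        (hsep T (hf.added_subset hT) (Flip.new_subset_of_mem_added hT) hgT).elim,
      fun hT => Or.inl ⟨hT, fun hTf => hf.not_old_subset_of_mem_removed hg hsep hTf hgT⟩⟩
  · change T ∈ A.triangles ↔ T ∈ A.triangles \ g.removed ∪ g.added
    simp only [Finset.mem_union, Finset.mem_sdiff]
    exact ⟨fun hT => Or.inl ⟨hT, fun hTg => hf.not_old_subset (hg.removed_subset hTg) hfT⟩,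
      fun h => h.elim And.left fun hT => (hf.not_old_subset_of_mem_added hg hsep hT hfT).elim⟩
  · change C.triangles = (A.triangles \ g.removed ∪ g.added) \ f.removed ∪ f.added
    rw [hg.triangles_eq, hf.triangles_eq]
    exact sdiff_union_sdiff_union_comm
      (Finset.disjoint_left.2 fun {T} hTf hTg => hsep T (hf.added_subset hTf)
        (Flip.new_subset_of_mem_added hTf) (Flip.old_subset_of_mem_removed hTg))
      (Finset.disjoint_left.2 fun {T} hTg hTf => hf.not_old_subset_of_mem_added hg hsep hTg
        (Flip.old_subset_of_mem_removed hTf))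

end FlipStep

namespace FlipSeq

variable {P : Finset Pt} {r : ℕ}

theorem new_ne_old_and_not_shareTriangle_of_sink (S : FlipSeq P r) {s : Fin r}
    (hsink : ∀ j, ¬ S.Arc s j) :
    ∀ j, s < j → (S.flips s).new ≠ (S.flips j).old ∧
      ¬ (S.tri j.castSucc).ShareTriangle (S.flips s).new (S.flips j).old := by
  intro j
  induction j using WellFoundedLT.induction with
  | ind j ih =>
    intro hsj
    -- no flip between `s` and `j` removes `(S.flips s).new`, so condition (1) of `s → j` fails
    have hbetween : ∀ p, s < p → p < j → (S.flips p).old ≠ (S.flips s).new :=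
      fun p hsp hpj => ((ih p hpj hsp).1).symm
    exact ⟨fun h => hsink j ⟨hsj, Or.inl h, hbetween⟩,
      fun h => hsink j ⟨hsj, Or.inr h, hbetween⟩⟩

theorem exists_postpone (S : FlipSeq P r) {f : Flip} (k : ℕ) (hk : k ≤ r)
    {A : Triangulation P} (hA : FlipStep A f (S.tri ⟨k, by omega⟩))
    (hcomm : ∀ j : Fin r, k ≤ j → f.new ≠ (S.flips j).old ∧
      ¬ (S.tri j.castSucc).ShareTriangle f.new (S.flips j).old) :
    ∃ V : ℕ → Triangulation P, V k = A ∧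
      (∀ j : Fin r, k ≤ j → FlipStep (V j) (S.flips j) (V (j + 1))) ∧
      FlipStep (V r) f (S.tri (Fin.last r)) := by
  induction h : r - k generalizing k A with
  | zero =>
    obtain rfl : k = r := by omega
    exact ⟨fun _ => A, rfl, fun j hj => absurd j.isLt (by omega), hA⟩
  | succ m ih =>
    have hkr : k < r := by omega
    obtain ⟨B', hAB', hB'⟩ := hA.exists_swap (S.step ⟨k, hkr⟩) (hcomm ⟨k, hkr⟩ le_rfl).1
      (hcomm ⟨k, hkr⟩ le_rfl).2
    obtain ⟨V, hV, hsteps, hlast⟩ :=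
      ih (k + 1) hkr hB' (fun j hj => hcomm j (by omega)) (by omega)
    refine ⟨Function.update V k A, by simp, fun j hj => ?_, ?_⟩
    · rcases (show (j : ℕ) = k ∨ k + 1 ≤ j by omega) with hjk | hjk
      · obtain rfl : j = ⟨k, hkr⟩ := Fin.ext hjk
        simpa [hV] using hAB'
      · rw [Function.update_of_ne (by omega), Function.update_of_ne (by omega)]
        exact hsteps j hjk
    · rwa [Function.update_of_ne hkr.ne']

end FlipSeq

/-- Let `T₀` be a triangulation of a finite point set `P` in the plane
and `F = ⟨f₁,…,f_r⟩` a valid sequence of flips transforming `T₀` into `T_r`. If `f_s` is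
a sink of `D_F` (no arc of `D_F` leaves `f_s`), then the sequence `F'` obtained from `F`
by deleting `f_s` and appending it at the end is a valid sequence of flips with respect
to `T₀` that transforms `T₀` into `T_r`. -/
theorem statement1 {P : Finset Pt} {r : ℕ} (S : FlipSeq P r) (s : Fin r)
    (hsink : ∀ j : Fin r, ¬ S.Arc s j) :
    ∃ S' : FlipSeq P r,
      S'.tri 0 = S.tri 0 ∧
      S'.tri (Fin.last r) = S.tri (Fin.last r) ∧
      ∀ p : Fin r, S'.flips p = S.flips (moveToEnd s p) := by
  obtain ⟨V, hV, hsteps, hlast⟩ := S.exists_postpone (s + 1) s.isLt (S.step s)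
    fun j hj => S.new_ne_old_and_not_shareTriangle_of_sink hsink j hj
  let T : Fin (r + 1) → Triangulation P := fun i =>
    if (i : ℕ) ≤ s then S.tri i else if (i : ℕ) < r then V (i + 1) else S.tri i
  have hT_le : ∀ i : Fin (r + 1), (i : ℕ) ≤ s → T i = S.tri i := fun i hi => if_pos hi
  have hT_mid : ∀ i : Fin (r + 1), (s : ℕ) ≤ i → (i : ℕ) < r → T i = V (i + 1) := by
    intro i hsi hir
    by_cases his : (i : ℕ) ≤ s
    · obtain rfl : i = s.castSucc := Fin.ext (by simp; omega)
      simpa [hV] using hT_le _ his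
    · simp [T, his, hir]
  have hT_last : T (Fin.last r) = S.tri (Fin.last r) := by simp [T]
  refine ⟨⟨T, fun p => S.flips (moveToEnd s p), fun p => ?_⟩, hT_le 0 (Nat.zero_le _),
    hT_last, fun p => rfl⟩
  unfold moveToEnd
  split_ifs with hps hpr
  · rw [hT_le _ (by simp only [Fin.val_castSucc]; omega),
      hT_le _ (by simp only [Fin.val_succ]; omega)]
    exact S.step p
  · rw [hT_mid _ (by simp only [Fin.val_castSucc]; omega) (by simp),
      hT_mid _ (by simp only [Fin.val_succ]; omega) (by simp only [Fin.val_succ]; omega)]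
    exact hsteps ⟨p + 1, hpr⟩ (by simp only; omega)
  · rw [show p.succ = Fin.last r from Fin.ext (by simp only [Fin.val_succ, Fin.val_last]; omega),
      hT_last, hT_mid _ (by simp only [Fin.val_castSucc]; omega) (by simp)]
    convert hlast using 2
    simp only [Fin.val_castSucc]
    omega
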